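/- For every initial distribution p on ℝ with ∫ w dp < ∞ and every state x: (a) the functions z ↦ F(p,z), z ↦ G(p,z), z ↦ f(x,z) and z ↦ g(x,z) are bounded càdlàg functions on ℝ whose left limits at any z ∈ ℝ equal F(p,z⁻), G(p,z⁻), f(x,z⁻) and g(x,z⁻), respectively; (b) as z → −∞ they converge to F(p,−∞), G(p,−∞), f(x,−∞), g(x,−∞) (the metrics of the always-active policy, threshold −∞); (c) as z → ∞ they converge to F(p,∞), G(p,∞), f(x,∞), g(x,∞) (the metrics of the always-passive policy, threshold ∞). -/

import Mathlib

open MeasureTheory ProbabilityTheory Filter Topology Set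

noncomputable section

/-- A restless bandit project: the model data (discount factor `β`, passive/active
Markov transition kernels `κ false`/`κ true`, reward `r` and resource consumption `c`),
Assumption 1 (the weighted sup-norm conditions for weight `w` and constants `M`, `γ`),
together with the threshold-policy performance metrics `F`, `G` (for `z`-policies,
active iff `x > z`), `Fm`, `Gm` (for `z⁻`-policies, active iff `x ≥ z`), and the
optimal value function `V lam` of the `lam`-price problem, each of which is the
(unique) `w`-bounded measurable solution of its fixed-point equation. -/
structure Bandit where
  β : ℝ
  κ : Bool → Kernel ℝ ℝ
  r : ℝ → Bool → ℝ
  c : ℝ → Bool → ℝ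
  w : ℝ → ℝ
  M : ℝ
  γ : ℝ
  F : ℝ → EReal → ℝ
  G : ℝ → EReal → ℝ
  Fm : ℝ → EReal → ℝ
  Gm : ℝ → EReal → ℝ
  V : ℝ → ℝ → ℝ
  hβ0 : 0 ≤ β
  hβ1 : β < 1
  hκ : ∀ a, IsMarkovKernel (κ a)
  hr_cont : ∀ a, Continuous fun x => r x a
  hc_cont : ∀ a, Continuous fun x => c x a
  hc0 : ∀ x, 0 ≤ c x false
  hc01 : ∀ x, c x false < c x true
  hw_meas : Measurable w
  hw_one : ∀ x, 1 ≤ w x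
  hM : 0 < M
  hβγ : β ≤ γ
  hγ1 : γ < 1
  hr_bd : ∀ x a, |r x a| ≤ M * w x
  hc_bd : ∀ x a, c x a ≤ M * w x
  hw_int : ∀ a x, Integrable w (κ a x)
  hw_drift : ∀ a x, β * ∫ y, w y ∂(κ a x) ≤ γ * w x
  hF_meas : ∀ z, Measurable fun x => F x z
  hG_meas : ∀ z, Measurable fun x => G x z
  hFm_meas : ∀ z, Measurable fun x => Fm x z
  hGm_meas : ∀ z, Measurable fun x => Gm x z
  hV_meas : ∀ lam, Measurable (V lam)
  hF_bdd : ∀ z, ∃ C, ∀ x, |F x z| ≤ C * w x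
  hG_bdd : ∀ z, ∃ C, ∀ x, |G x z| ≤ C * w x
  hFm_bdd : ∀ z, ∃ C, ∀ x, |Fm x z| ≤ C * w x
  hGm_bdd : ∀ z, ∃ C, ∀ x, |Gm x z| ≤ C * w x
  hV_bdd : ∀ lam, ∃ C, ∀ x, |V lam x| ≤ C * w x
  hF_eq : ∀ x z, F x z =
    r x (decide (z < (x : EReal))) +
      β * ∫ y, F y z ∂(κ (decide (z < (x : EReal))) x)
  hG_eq : ∀ x z, G x z =
    c x (decide (z < (x : EReal))) +
      β * ∫ y, G y z ∂(κ (decide (z < (x : EReal))) x)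
  hFm_eq : ∀ x z, Fm x z =
    r x (decide (z ≤ (x : EReal))) +
      β * ∫ y, Fm y z ∂(κ (decide (z ≤ (x : EReal))) x)
  hGm_eq : ∀ x z, Gm x z =
    c x (decide (z ≤ (x : EReal))) +
      β * ∫ y, Gm y z ∂(κ (decide (z ≤ (x : EReal))) x)
  hV_eq : ∀ lam x, V lam x =
    max (r x false - lam * c x false + β * ∫ y, V lam y ∂(κ false x))
        (r x true - lam * c x true + β * ∫ y, V lam y ∂(κ true x))

/-- `ν` is the Lebesgue–Stieltjes measure of the (bounded nonincreasing
right-continuous) function `h`: `ν(z₁,z₂] = h z₁ - h z₂`. -/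
def IsLSMeasureOfAnti (h : ℝ → ℝ) (ν : Measure ℝ) : Prop :=
  ∀ z₁ z₂ : ℝ, z₁ ≤ z₂ → ν (Set.Ioc z₁ z₂) = ENNReal.ofReal (h z₁ - h z₂)

/-- `ν` is the Lebesgue–Stieltjes measure of the (bounded nondecreasing
right-continuous) function `h`: `ν(z₁,z₂] = h z₂ - h z₁`. -/
def IsLSMeasureOfMono (h : ℝ → ℝ) (ν : Measure ℝ) : Prop :=
  ∀ z₁ z₂ : ℝ, z₁ ≤ z₂ → ν (Set.Ioc z₁ z₂) = ENNReal.ofReal (h z₂ - h z₁)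

/-- The real interval `(z₁, z₂] ⊆ ℝ` with extended-real endpoints. -/
def iocR (z₁ z₂ : EReal) : Set ℝ := {y : ℝ | z₁ < (y : EReal) ∧ (y : EReal) ≤ z₂}

/-- `t`-step distribution of the Markov chain with kernel `κ` and initial law `p`. -/
def kerIter (κ : Kernel ℝ ℝ) : ℕ → Measure ℝ → Measure ℝ
  | 0, p => p
  | (t + 1), p => (kerIter κ t p).bind fun x => κ x

namespace Bandit

variable (P : Bandit)

/-- Marginal reward metric `f(x,z)` of the `z`-policy. -/
def f (x : ℝ) (z : EReal) : ℝ :=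
  (P.r x true - P.r x false) +
    P.β * ((∫ y, P.F y z ∂(P.κ true x)) - ∫ y, P.F y z ∂(P.κ false x))

/-- Marginal resource metric `g(x,z)` of the `z`-policy. -/
def g (x : ℝ) (z : EReal) : ℝ :=
  (P.c x true - P.c x false) +
    P.β * ((∫ y, P.G y z ∂(P.κ true x)) - ∫ y, P.G y z ∂(P.κ false x))

/-- Marginal reward metric `f(x,z⁻)` of the `z⁻`-policy. -/
def fm (x : ℝ) (z : EReal) : ℝ :=
  (P.r x true - P.r x false) +
    P.β * ((∫ y, P.Fm y z ∂(P.κ true x)) - ∫ y, P.Fm y z ∂(P.κ false x))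

/-- Marginal resource metric `g(x,z⁻)` of the `z⁻`-policy. -/
def gm (x : ℝ) (z : EReal) : ℝ :=
  (P.c x true - P.c x false) +
    P.β * ((∫ y, P.Gm y z ∂(P.κ true x)) - ∫ y, P.Gm y z ∂(P.κ false x))

/-- Marginal productivity metric `m(x,z) = f(x,z)/g(x,z)`. -/
def m (x : ℝ) (z : EReal) : ℝ := P.f x z / P.g x z

/-- Marginal productivity metric `m(x,z⁻) = f(x,z⁻)/g(x,z⁻)`. -/
def mm (x : ℝ) (z : EReal) : ℝ := P.fm x z / P.gm x z

/-- The marginal productivity (MP) index `m*(x) = m(x,x)`. -/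
def mStar (x : ℝ) : ℝ := P.m x (x : EReal)

/-- The active action is `P_lam`-optimal at `x`. -/
def ActOpt (lam x : ℝ) : Prop :=
  P.r x false - lam * P.c x false + P.β * ∫ y, P.V lam y ∂(P.κ false x) ≤
    P.r x true - lam * P.c x true + P.β * ∫ y, P.V lam y ∂(P.κ true x)

/-- The passive action is `P_lam`-optimal at `x`. -/
def PassOpt (lam x : ℝ) : Prop :=
  P.r x true - lam * P.c x true + P.β * ∫ y, P.V lam y ∂(P.κ true x) ≤
    P.r x false - lam * P.c x false + P.β * ∫ y, P.V lam y ∂(P.κ false x)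

/-- The project is indexable with index `ν`. -/
def Indexable (ν : ℝ → ℝ) : Prop :=
  ∀ lam x, (P.ActOpt lam x ↔ lam ≤ ν x) ∧ (P.PassOpt lam x ↔ ν x ≤ lam)

/-- The `z`-policy is `P_lam`-optimal. -/
def ZPolicyOpt (z : EReal) (lam : ℝ) : Prop :=
  ∀ x, P.F x z - lam * P.G x z = P.V lam x

/-- The `z⁻`-policy is `P_lam`-optimal. -/
def ZmPolicyOpt (z : EReal) (lam : ℝ) : Prop :=
  ∀ x, P.Fm x z - lam * P.Gm x z = P.V lam x

/-- The project is strongly threshold-indexable with index `ν`. -/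
def StronglyThresholdIndexable (ν : ℝ → ℝ) : Prop :=
  P.Indexable ν ∧
    ∀ lam : ℝ, ∃ z : EReal, P.ZPolicyOpt z lam ∧ P.ZmPolicyOpt z lam

/-- PCL-indexability condition (PCLI1). -/
def PCLI1 : Prop := ∀ (x : ℝ) (z : EReal), 0 < P.g x z

/-- PCL-indexability condition (PCLI2). -/
def PCLI2 : Prop :=
  Monotone P.mStar ∧ Continuous P.mStar ∧ BddBelow (Set.range P.mStar)

/-- PCL-indexability condition (PCLI3). -/
def PCLI3 : Prop :=
  ∀ x : ℝ, ∀ ν : Measure ℝ, IsLSMeasureOfAnti (fun z : ℝ => P.G x z) ν →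
    ∀ z₁ z₂ : ℝ, z₁ < z₂ →
      P.F x z₂ - P.F x z₁ = -∫ z in Set.Ioc z₁ z₂, P.mStar z ∂ν

/-- The project is PCL-indexable. -/
def PCLIndexable : Prop := P.PCLI1 ∧ P.PCLI2 ∧ P.PCLI3

/-- Reward metric with initial distribution `p`. -/
def Fp (p : Measure ℝ) (z : EReal) : ℝ := ∫ x, P.F x z ∂p

/-- Resource metric with initial distribution `p`. -/
def Gp (p : Measure ℝ) (z : EReal) : ℝ := ∫ x, P.G x z ∂p

/-- `z⁻`-policy reward metric with initial distribution `p`. -/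
def Fmp (p : Measure ℝ) (z : EReal) : ℝ := ∫ x, P.Fm x z ∂p

/-- `z⁻`-policy resource metric with initial distribution `p`. -/
def Gmp (p : Measure ℝ) (z : EReal) : ℝ := ∫ x, P.Gm x z ∂p

/-- An admissible initial distribution: a probability measure with `∫ w dp < ∞`. -/
def IsInitDist (p : Measure ℝ) : Prop :=
  IsProbabilityMeasure p ∧ Integrable P.w p

/-- The transition kernel of the `z`-policy (active iff `x > z`). -/
def thrKer (z : EReal) : Kernel ℝ ℝ :=
  haveI : DecidablePred (· ∈ {x : ℝ | z < (x : EReal)}) := Classical.decPred _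
  Kernel.piecewise
    (show MeasurableSet {x : ℝ | z < (x : EReal)} from
      measurable_coe_real_ereal measurableSet_Ioi)
    (P.κ true) (P.κ false)

/-- The transition kernel of the `z⁻`-policy (active iff `x ≥ z`). -/
def thrKerM (z : EReal) : Kernel ℝ ℝ :=
  haveI : DecidablePred (· ∈ {x : ℝ | z ≤ (x : EReal)}) := Classical.decPred _
  Kernel.piecewise
    (show MeasurableSet {x : ℝ | z ≤ (x : EReal)} from
      measurable_coe_real_ereal measurableSet_Ici)
    (P.κ true) (P.κ false)

/-- The (discounted) state occupation measure `μ_p^z` of the `z`-policy. -/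
def occ (z : EReal) (p : Measure ℝ) : Measure ℝ :=
  Measure.sum fun t : ℕ => ENNReal.ofReal (P.β ^ t) • kerIter (P.thrKer z) t p

/-- The (discounted) state occupation measure `μ_p^{z⁻}` of the `z⁻`-policy. -/
def occM (z : EReal) (p : Measure ℝ) : Measure ℝ :=
  Measure.sum fun t : ℕ => ENNReal.ofReal (P.β ^ t) • kerIter (P.thrKerM z) t p

end Bandit

/-- Finite-horizon reward metric `F_k(x,z)` (value iteration). -/
def Bandit.Fk (P : Bandit) : ℕ → ℝ → EReal → ℝ
  | 0, x, z => P.r x (decide (z < (x : EReal)))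
  | (k + 1), x, z =>
      P.r x (decide (z < (x : EReal))) +
        P.β * ∫ y, Bandit.Fk P k y z ∂(P.κ (decide (z < (x : EReal))) x)

/-- Finite-horizon resource metric `G_k(x,z)` (value iteration). -/
def Bandit.Gk (P : Bandit) : ℕ → ℝ → EReal → ℝ
  | 0, x, z => P.c x (decide (z < (x : EReal)))
  | (k + 1), x, z =>
      P.c x (decide (z < (x : EReal))) +
        P.β * ∫ y, Bandit.Gk P k y z ∂(P.κ (decide (z < (x : EReal))) x)

/-- Finite-horizon marginal reward metric `f_k(x,z)`. -/
def Bandit.fk (P : Bandit) : ℕ → ℝ → EReal → ℝ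
  | 0, x, _ => P.r x true - P.r x false
  | (k + 1), x, z =>
      (P.r x true - P.r x false) +
        P.β * ((∫ y, P.Fk k y z ∂(P.κ true x)) - ∫ y, P.Fk k y z ∂(P.κ false x))

/-- Finite-horizon marginal resource metric `g_k(x,z)`. -/
def Bandit.gk (P : Bandit) : ℕ → ℝ → EReal → ℝ
  | 0, x, _ => P.c x true - P.c x false
  | (k + 1), x, z =>
      (P.c x true - P.c x false) +
        P.β * ((∫ y, P.Gk k y z ∂(P.κ true x)) - ∫ y, P.Gk k y z ∂(P.κ false x))

namespace Bandit

variable (P : Bandit)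

/-- Finite-horizon MP metric `m_k(x,z)`. -/
def mk' (k : ℕ) (x : ℝ) (z : EReal) : ℝ := P.fk k x z / P.gk k x z

/-- Finite-horizon MP index `m*_k(x)`. -/
def mkStar (k : ℕ) (x : ℝ) : ℝ := P.mk' k x (x : EReal)

/-- `g̲(x,z) = inf_k g_k(x,z)`. -/
def gbar (x : ℝ) (z : EReal) : ℝ := ⨅ k : ℕ, P.gk k x z

end Bandit

/-! The metrics of a threshold policy are the `w`-bounded fixed points of its Bellman operator,
which contracts the `w`-weighted sup norm by the factor `γ`. Hence value iteration started at `0`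
is within `γ ^ k * M / (1 - γ) * w` of them after `k` steps, uniformly in the threshold. When `z`
tends to `z₀` from the right (from the left, to `-∞`, to `∞`), the `z`-policy eventually agrees
at each fixed state with the `z₀`-policy (the `z₀⁻`-policy, the always-active, the always-passive
policy), so every value iterate converges by dominated convergence with dominating function a
multiple of `w`. The uniform approximation passes these limits to the metrics themselves, and
dominated convergence once more to their integrals against `p` and against the kernels. -/

section WeightedBound

variable {X : Type*} [MeasurableSpace X] {μ : Measure X} {w φ : X → ℝ} {C : ℝ}

lemma abs_integral_le_of_abs_le_mul (hw : Integrable w μ) (hφ : ∀ y, |φ y| ≤ C * w y) :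
    |∫ y, φ y ∂μ| ≤ C * ∫ y, w y ∂μ := by
  rw [← integral_const_mul]
  exact norm_integral_le_of_norm_le (f := φ) (hw.const_mul C) (ae_of_all _ hφ)

lemma integrable_of_abs_le_mul (hw : Integrable w μ) (hφm : Measurable φ)
    (hφ : ∀ y, |φ y| ≤ C * w y) : Integrable φ μ :=
  (hw.const_mul C).mono' hφm.aestronglyMeasurable (ae_of_all _ hφ)

lemma tendsto_integral_of_abs_le_mul {ι : Type*} {l : Filter ι} [l.IsCountablyGenerated]
    (hw : Integrable w μ) {φ : ι → X → ℝ} {φ' : X → ℝ} (hφm : ∀ z, Measurable (φ z))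
    (hφ : ∀ z y, |φ z y| ≤ C * w y) (hlim : ∀ y, Tendsto (fun z => φ z y) l (𝓝 (φ' y))) :
    Tendsto (fun z => ∫ y, φ z y ∂μ) l (𝓝 (∫ y, φ' y ∂μ)) :=
  tendsto_integral_filter_of_dominated_convergence (fun y => C * w y)
    (.of_forall fun z => (hφm z).aestronglyMeasurable) (.of_forall fun z => ae_of_all _ (hφ z))
    (hw.const_mul C) (ae_of_all _ hlim)

lemma measurable_bool_apply {Y : Type*} [MeasurableSpace Y] {h : Bool → X → Y}
    (hh : ∀ a, Measurable (h a)) {α : X → Bool} (hα : Measurable α) :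
    Measurable fun x => h (α x) x :=
  (measurable_from_prod_countable_left (f := fun q : X × Bool => h q.2 q.1) hh).comp
    (measurable_id.prodMk hα)

end WeightedBound

namespace Bandit

section PolicyValue

variable {P : Bandit}

lemma abs_beta_mul_integral_le {φ : ℝ → ℝ} {C : ℝ} (hφ : ∀ y, |φ y| ≤ C * P.w y)
    (a : Bool) (x : ℝ) : |P.β * ∫ y, φ y ∂(P.κ a x)| ≤ P.γ * C * P.w x := by
  have hC : 0 ≤ C := nonneg_of_mul_nonneg_left ((abs_nonneg _).trans (hφ 0))
    (zero_lt_one.trans_le (P.hw_one 0))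
  calc |P.β * ∫ y, φ y ∂(P.κ a x)| = P.β * |∫ y, φ y ∂(P.κ a x)| := by
        rw [abs_mul, abs_of_nonneg P.hβ0]
    _ ≤ P.β * (C * ∫ y, P.w y ∂(P.κ a x)) :=
        mul_le_mul_of_nonneg_left (abs_integral_le_of_abs_le_mul (P.hw_int a x) hφ) P.hβ0
    _ = C * (P.β * ∫ y, P.w y ∂(P.κ a x)) := by ring
    _ ≤ C * (P.γ * P.w x) := mul_le_mul_of_nonneg_left (P.hw_drift a x) hC
    _ = P.γ * C * P.w x := by ring

lemma tendsto_γ_pow : Tendsto (fun k => P.γ ^ k) atTop (𝓝 0) :=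
  tendsto_pow_atTop_nhds_zero_of_lt_one (P.hβ0.trans P.hβγ) P.hγ1

variable (P) in
def valueBound : ℝ := P.M / (1 - P.γ)

lemma valueBound_nonneg : 0 ≤ P.valueBound := div_nonneg P.hM.le (by linarith [P.hγ1])

lemma M_add_γ_mul_valueBound : P.M + P.γ * P.valueBound = P.valueBound := by
  have : 1 - P.γ ≠ 0 := by linarith [P.hγ1]
  unfold valueBound
  field_simp
  ring

variable (P) in
structure IsPolicyValue (ρ : ℝ → Bool → ℝ) (α : ℝ → Bool) (H : ℝ → ℝ) : Prop where
  measurable_reward : ∀ a, Measurable fun x => ρ x a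
  abs_reward_le : ∀ x a, |ρ x a| ≤ P.M * P.w x
  measurable_policy : Measurable α
  measurable : Measurable H
  exists_bound : ∃ C, ∀ x, |H x| ≤ C * P.w x
  eq : ∀ x, H x = ρ x (α x) + P.β * ∫ y, H y ∂(P.κ (α x) x)

variable (P) in
def valueIter (ρ : ℝ → Bool → ℝ) (α : ℝ → Bool) : ℕ → ℝ → ℝ
  | 0 => 0
  | k + 1 => fun x => ρ x (α x) + P.β * ∫ y, valueIter ρ α k y ∂(P.κ (α x) x)

variable (P) in
def marginal (ρ : ℝ → Bool → ℝ) (H : ℝ → ℝ) (x : ℝ) : ℝ :=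
  (ρ x true - ρ x false) + P.β * ((∫ y, H y ∂(P.κ true x)) - ∫ y, H y ∂(P.κ false x))

variable {ρ : ℝ → Bool → ℝ} {α : ℝ → Bool}

lemma measurable_valueIter (hρm : ∀ a, Measurable fun x => ρ x a) (hα : Measurable α) :
    ∀ k, Measurable (P.valueIter ρ α k)
  | 0 => measurable_const
  | k + 1 =>
    measurable_bool_apply (h := fun a x => ρ x a + P.β * ∫ y, P.valueIter ρ α k y ∂(P.κ a x))
      (fun a => (hρm a).add (((measurable_valueIter hρm hα k).stronglyMeasurable.integral_kernel
        (κ := P.κ a)).measurable.const_mul _)) hα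

lemma abs_valueIter_le (hρ : ∀ x a, |ρ x a| ≤ P.M * P.w x) :
    ∀ k x, |P.valueIter ρ α k x| ≤ P.valueBound * P.w x
  | 0, x => by simpa [valueIter] using mul_nonneg valueBound_nonneg (zero_le_one.trans (P.hw_one x))
  | k + 1, x => calc
      |P.valueIter ρ α (k + 1) x|
          ≤ |ρ x (α x)| + |P.β * ∫ y, P.valueIter ρ α k y ∂(P.κ (α x) x)| := abs_add_le _ _
      _ ≤ P.M * P.w x + P.γ * P.valueBound * P.w x :=
          add_le_add (hρ x _) (abs_beta_mul_integral_le (abs_valueIter_le hρ k) _ x)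
      _ = P.valueBound * P.w x := by linear_combination P.w x * M_add_γ_mul_valueBound

namespace IsPolicyValue

variable {H : ℝ → ℝ}

lemma abs_sub_valueIter_le (hH : P.IsPolicyValue ρ α H) {C : ℝ} (hC : ∀ x, |H x| ≤ C * P.w x) :
    ∀ k x, |H x - P.valueIter ρ α k x| ≤ P.γ ^ k * C * P.w x
  | 0, x => by simpa [valueIter] using hC x
  | k + 1, x => by
    have hiter_int : ∀ a, Integrable (P.valueIter ρ α k) (P.κ a x) := fun a =>
      integrable_of_abs_le_mul (P.hw_int a x)
        (measurable_valueIter hH.measurable_reward hH.measurable_policy k)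
        (abs_valueIter_le hH.abs_reward_le k)
    have hH_int : ∀ a, Integrable H (P.κ a x) := fun a =>
      integrable_of_abs_le_mul (P.hw_int a x) hH.measurable hC
    have hdiff : H x - P.valueIter ρ α (k + 1) x =
        P.β * ∫ y, (H y - P.valueIter ρ α k y) ∂(P.κ (α x) x) := by
      rw [hH.eq x, valueIter, integral_sub (hH_int _) (hiter_int _)]
      ring
    rw [hdiff, pow_succ]
    have := abs_beta_mul_integral_le (hH.abs_sub_valueIter_le hC k) (α x) x
    linarith

lemma abs_le (hH : P.IsPolicyValue ρ α H) (x : ℝ) :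
    |H x| ≤ P.valueBound * P.w x := by
  obtain ⟨C, hC⟩ := hH.exists_bound
  have hlim : Tendsto (fun k => P.valueBound * P.w x + P.γ ^ k * C * P.w x) atTop
      (𝓝 (P.valueBound * P.w x)) := by
    simpa using (tendsto_γ_pow.mul_const C |>.mul_const (P.w x)).const_add _
  refine ge_of_tendsto' hlim fun k => ?_
  calc |H x| ≤ |P.valueIter ρ α k x| + |H x - P.valueIter ρ α k x| := by
        linarith [abs_sub_abs_le_abs_sub (H x) (P.valueIter ρ α k x)]
    _ ≤ _ := add_le_add (abs_valueIter_le hH.abs_reward_le k x) (hH.abs_sub_valueIter_le hC k x)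

lemma abs_integral_le (hH : P.IsPolicyValue ρ α H) {μ : Measure ℝ} (hw : Integrable P.w μ) :
    |∫ y, H y ∂μ| ≤ P.valueBound * ∫ y, P.w y ∂μ :=
  abs_integral_le_of_abs_le_mul hw hH.abs_le

lemma abs_marginal_le (hH : P.IsPolicyValue ρ α H) (x : ℝ) :
    |P.marginal ρ H x| ≤ |ρ x true - ρ x false| + 2 * (P.γ * P.valueBound * P.w x) := by
  have h₁ := abs_beta_mul_integral_le hH.abs_le true x
  have h₀ := abs_beta_mul_integral_le hH.abs_le false x
  calc |P.marginal ρ H x|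
      = |(ρ x true - ρ x false) +
          (P.β * ∫ y, H y ∂(P.κ true x) - P.β * ∫ y, H y ∂(P.κ false x))| := by
        rw [marginal, mul_sub]
    _ ≤ |ρ x true - ρ x false| +
          (|P.β * ∫ y, H y ∂(P.κ true x)| + |P.β * ∫ y, H y ∂(P.κ false x)|) :=
        (abs_add_le _ _).trans (add_le_add_right (abs_sub _ _) _)
    _ ≤ _ := by linarith

end IsPolicyValue

section Family

variable {ι : Type*} {α : ι → ℝ → Bool} {H : ι → ℝ → ℝ}

lemma tendstoUniformly_valueIter (hH : ∀ z, P.IsPolicyValue ρ (α z) (H z)) (x : ℝ) :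
    TendstoUniformly (fun k z => P.valueIter ρ (α z) k x) (fun z => H z x) atTop := by
  have herr : Tendsto (fun k => P.γ ^ k * P.valueBound * P.w x) atTop (𝓝 0) := by
    simpa using tendsto_γ_pow.mul_const P.valueBound |>.mul_const (P.w x)
  refine Metric.tendstoUniformly_iff.2 fun ε hε => (herr.eventually (gt_mem_nhds hε)).mono
    fun k hk z => ?_
  rw [Real.dist_eq]
  exact ((hH z).abs_sub_valueIter_le (hH z).abs_le k x).trans_lt hk

lemma tendsto_valueIter {l : Filter ι} [l.IsCountablyGenerated] {α' : ℝ → Bool}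
    (hρm : ∀ a, Measurable fun x => ρ x a) (hαm : ∀ z, Measurable (α z))
    (hρ : ∀ x a, |ρ x a| ≤ P.M * P.w x) (hα : ∀ x, ∀ᶠ z in l, α z x = α' x) :
    ∀ k x, Tendsto (fun z => P.valueIter ρ (α z) k x) l (𝓝 (P.valueIter ρ α' k x))
  | 0, x => tendsto_const_nhds
  | k + 1, x => by
    have hint : ∀ a, Tendsto (fun z => ∫ y, P.valueIter ρ (α z) k y ∂(P.κ a x)) l
        (𝓝 (∫ y, P.valueIter ρ α' k y ∂(P.κ a x))) := fun a =>
      tendsto_integral_of_abs_le_mul (P.hw_int a x) (fun z => measurable_valueIter hρm (hαm z) k)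
        (fun z => abs_valueIter_le hρ k) (tendsto_valueIter hρm hαm hρ hα k)
    refine ((hint (α' x)).const_mul P.β |>.const_add (ρ x (α' x))).congr' ?_
    filter_upwards [hα x] with z hz
    simp only [valueIter, hz]

variable {l : Filter ι} [l.IsCountablyGenerated] {α' : ℝ → Bool} {H' : ℝ → ℝ}

lemma IsPolicyValue.tendsto (hH : ∀ z, P.IsPolicyValue ρ (α z) (H z))
    (hH' : P.IsPolicyValue ρ α' H') (hα : ∀ x, ∀ᶠ z in l, α z x = α' x) (x : ℝ) :
    Tendsto (fun z => H z x) l (𝓝 (H' x)) :=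
  (tendstoUniformly_valueIter hH x).tendsto_of_eventually_tendsto
    (.of_forall fun k => tendsto_valueIter hH'.measurable_reward
      (fun z => (hH z).measurable_policy) hH'.abs_reward_le hα k x)
    ((tendstoUniformly_valueIter (ι := Unit) (fun _ => hH') x).tendsto_at ())

lemma IsPolicyValue.tendsto_integral (hH : ∀ z, P.IsPolicyValue ρ (α z) (H z))
    (hH' : P.IsPolicyValue ρ α' H') (hα : ∀ x, ∀ᶠ z in l, α z x = α' x) {μ : Measure ℝ}
    (hw : Integrable P.w μ) : Tendsto (fun z => ∫ y, H z y ∂μ) l (𝓝 (∫ y, H' y ∂μ)) :=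
  tendsto_integral_of_abs_le_mul hw (fun z => (hH z).measurable) (fun z => (hH z).abs_le)
    (IsPolicyValue.tendsto hH hH' hα)

lemma IsPolicyValue.tendsto_marginal (hH : ∀ z, P.IsPolicyValue ρ (α z) (H z))
    (hH' : P.IsPolicyValue ρ α' H') (hα : ∀ x, ∀ᶠ z in l, α z x = α' x) (x : ℝ) :
    Tendsto (fun z => P.marginal ρ (H z) x) l (𝓝 (P.marginal ρ H' x)) :=
  ((IsPolicyValue.tendsto_integral hH hH' hα (P.hw_int true x)).sub
    (IsPolicyValue.tendsto_integral hH hH' hα (P.hw_int false x)) |>.const_mul P.β).const_add _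

end Family

end PolicyValue

lemma abs_c_le (P : Bandit) (x : ℝ) (a : Bool) : |P.c x a| ≤ P.M * P.w x := by
  have hc : 0 ≤ P.c x a := by
    cases a
    · exact P.hc0 x
    · exact (P.hc0 x).trans (P.hc01 x).le
  rw [abs_of_nonneg hc]
  exact P.hc_bd x a

lemma measurable_decide_lt (z : EReal) : Measurable fun x : ℝ => decide (z < (x : EReal)) :=
  measurable_to_bool <| by
    convert measurable_coe_real_ereal (measurableSet_Ioi (a := z)) using 1
    ext; simp

lemma measurable_decide_le (z : EReal) : Measurable fun x : ℝ => decide (z ≤ (x : EReal)) :=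
  measurable_to_bool <| by
    convert measurable_coe_real_ereal (measurableSet_Ici (a := z)) using 1
    ext; simp

lemma isPolicyValue_F (P : Bandit) (z : EReal) :
    P.IsPolicyValue P.r (fun x => decide (z < (x : EReal))) (fun x => P.F x z) :=
  ⟨fun a => (P.hr_cont a).measurable, P.hr_bd, measurable_decide_lt z, P.hF_meas z, P.hF_bdd z,
    fun x => P.hF_eq x z⟩

lemma isPolicyValue_G (P : Bandit) (z : EReal) :
    P.IsPolicyValue P.c (fun x => decide (z < (x : EReal))) (fun x => P.G x z) :=
  ⟨fun a => (P.hc_cont a).measurable, P.abs_c_le, measurable_decide_lt z, P.hG_meas z,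
    P.hG_bdd z, fun x => P.hG_eq x z⟩

lemma isPolicyValue_Fm (P : Bandit) (z : EReal) :
    P.IsPolicyValue P.r (fun x => decide (z ≤ (x : EReal))) (fun x => P.Fm x z) :=
  ⟨fun a => (P.hr_cont a).measurable, P.hr_bd, measurable_decide_le z, P.hFm_meas z,
    P.hFm_bdd z, fun x => P.hFm_eq x z⟩

lemma isPolicyValue_Gm (P : Bandit) (z : EReal) :
    P.IsPolicyValue P.c (fun x => decide (z ≤ (x : EReal))) (fun x => P.Gm x z) :=
  ⟨fun a => (P.hc_cont a).measurable, P.abs_c_le, measurable_decide_le z, P.hGm_meas z,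
    P.hGm_bdd z, fun x => P.hGm_eq x z⟩

lemma eventually_decide_lt_nhdsGE (z₀ x : ℝ) :
    ∀ᶠ z : ℝ in 𝓝[≥] z₀, decide ((z : EReal) < x) = decide ((z₀ : EReal) < x) := by
  simp only [EReal.coe_lt_coe_iff, decide_eq_decide]
  rcases lt_or_ge z₀ x with h | h
  · filter_upwards [Ico_mem_nhdsGE h] with z hz using iff_of_true hz.2 h
  · filter_upwards [self_mem_nhdsWithin] with z (hz : z₀ ≤ z)
      using iff_of_false (not_lt.2 (h.trans hz)) (not_lt.2 h)

lemma eventually_decide_lt_nhdsLT (z₀ x : ℝ) :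
    ∀ᶠ z : ℝ in 𝓝[<] z₀, decide ((z : EReal) < x) = decide ((z₀ : EReal) ≤ x) := by
  simp only [EReal.coe_lt_coe_iff, EReal.coe_le_coe_iff, decide_eq_decide]
  rcases le_or_gt z₀ x with h | h
  · filter_upwards [self_mem_nhdsWithin] with z (hz : z < z₀) using iff_of_true (hz.trans_le h) h
  · filter_upwards [Ioo_mem_nhdsLT h] with z hz using iff_of_false (not_lt.2 hz.1.le) (not_le.2 h)

lemma eventually_decide_lt_atBot (x : ℝ) :
    ∀ᶠ z : ℝ in atBot, decide ((z : EReal) < x) = decide ((⊥ : EReal) < x) := by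
  filter_upwards [eventually_lt_atBot x] with z hz
  simp [hz]

lemma eventually_decide_lt_atTop (x : ℝ) :
    ∀ᶠ z : ℝ in atTop, decide ((z : EReal) < x) = decide ((⊤ : EReal) < x) := by
  filter_upwards [eventually_ge_atTop x] with z hz
  simp [hz]

lemma tendsto_metrics (P : Bandit) {l : Filter ℝ} [l.IsCountablyGenerated] {α' : ℝ → Bool}
    {F' G' : ℝ → ℝ} (hF' : P.IsPolicyValue P.r α' F') (hG' : P.IsPolicyValue P.c α' G')
    (hα : ∀ x : ℝ, ∀ᶠ z : ℝ in l, decide ((z : EReal) < x) = α' x) {p : Measure ℝ}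
    (hp : Integrable P.w p) (x : ℝ) :
    Tendsto (fun z : ℝ => P.Fp p z) l (𝓝 (∫ y, F' y ∂p)) ∧
      Tendsto (fun z : ℝ => P.Gp p z) l (𝓝 (∫ y, G' y ∂p)) ∧
      Tendsto (fun z : ℝ => P.f x z) l (𝓝 (P.marginal P.r F' x)) ∧
      Tendsto (fun z : ℝ => P.g x z) l (𝓝 (P.marginal P.c G' x)) :=
  ⟨IsPolicyValue.tendsto_integral (fun z : ℝ => P.isPolicyValue_F z) hF' hα hp,
    IsPolicyValue.tendsto_integral (fun z : ℝ => P.isPolicyValue_G z) hG' hα hp,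
    IsPolicyValue.tendsto_marginal (fun z : ℝ => P.isPolicyValue_F z) hF' hα x,
    IsPolicyValue.tendsto_marginal (fun z : ℝ => P.isPolicyValue_G z) hG' hα x⟩

end Bandit

/-- Càdlàg properties of the performance metrics as functions of the threshold:
they are bounded, right-continuous, their left limits at `z` are the
`z⁻`-policy metrics, and they converge at `∓∞` to the always-active /
always-passive metrics. -/
theorem metrics_cadlag (P : Bandit) (p : Measure ℝ) (hp : P.IsInitDist p)
    (x : ℝ) :
    ((∃ C, ∀ z : ℝ, |P.Fp p z| ≤ C) ∧ (∃ C, ∀ z : ℝ, |P.Gp p z| ≤ C) ∧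
      (∃ C, ∀ z : ℝ, |P.f x z| ≤ C) ∧ (∃ C, ∀ z : ℝ, |P.g x z| ≤ C)) ∧
    (∀ z₀ : ℝ,
      Filter.Tendsto (fun z : ℝ => P.Fp p z) (nhdsWithin z₀ (Set.Ici z₀)) (nhds (P.Fp p z₀)) ∧
      Filter.Tendsto (fun z : ℝ => P.Gp p z) (nhdsWithin z₀ (Set.Ici z₀)) (nhds (P.Gp p z₀)) ∧
      Filter.Tendsto (fun z : ℝ => P.f x z) (nhdsWithin z₀ (Set.Ici z₀)) (nhds (P.f x z₀)) ∧
      Filter.Tendsto (fun z : ℝ => P.g x z) (nhdsWithin z₀ (Set.Ici z₀)) (nhds (P.g x z₀))) ∧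
    (∀ z₀ : ℝ,
      Filter.Tendsto (fun z : ℝ => P.Fp p z) (nhdsWithin z₀ (Set.Iio z₀)) (nhds (P.Fmp p z₀)) ∧
      Filter.Tendsto (fun z : ℝ => P.Gp p z) (nhdsWithin z₀ (Set.Iio z₀)) (nhds (P.Gmp p z₀)) ∧
      Filter.Tendsto (fun z : ℝ => P.f x z) (nhdsWithin z₀ (Set.Iio z₀)) (nhds (P.fm x z₀)) ∧
      Filter.Tendsto (fun z : ℝ => P.g x z) (nhdsWithin z₀ (Set.Iio z₀)) (nhds (P.gm x z₀))) ∧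
    (Filter.Tendsto (fun z : ℝ => P.Fp p z) Filter.atBot (nhds (P.Fp p ⊥)) ∧
      Filter.Tendsto (fun z : ℝ => P.Gp p z) Filter.atBot (nhds (P.Gp p ⊥)) ∧
      Filter.Tendsto (fun z : ℝ => P.f x z) Filter.atBot (nhds (P.f x ⊥)) ∧
      Filter.Tendsto (fun z : ℝ => P.g x z) Filter.atBot (nhds (P.g x ⊥))) ∧
    (Filter.Tendsto (fun z : ℝ => P.Fp p z) Filter.atTop (nhds (P.Fp p ⊤)) ∧
      Filter.Tendsto (fun z : ℝ => P.Gp p z) Filter.atTop (nhds (P.Gp p ⊤)) ∧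
      Filter.Tendsto (fun z : ℝ => P.f x z) Filter.atTop (nhds (P.f x ⊤)) ∧
      Filter.Tendsto (fun z : ℝ => P.g x z) Filter.atTop (nhds (P.g x ⊤))) := by
  obtain ⟨-, hwp⟩ := hp
  refine ⟨⟨⟨_, fun z => (P.isPolicyValue_F z).abs_integral_le hwp⟩,
      ⟨_, fun z => (P.isPolicyValue_G z).abs_integral_le hwp⟩,
      ⟨_, fun z => (P.isPolicyValue_F z).abs_marginal_le x⟩,
      ⟨_, fun z => (P.isPolicyValue_G z).abs_marginal_le x⟩⟩,
    fun z₀ => P.tendsto_metrics (P.isPolicyValue_F z₀) (P.isPolicyValue_G z₀)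
      (Bandit.eventually_decide_lt_nhdsGE z₀) hwp x,
    fun z₀ => P.tendsto_metrics (P.isPolicyValue_Fm z₀) (P.isPolicyValue_Gm z₀)
      (Bandit.eventually_decide_lt_nhdsLT z₀) hwp x,
    P.tendsto_metrics (P.isPolicyValue_F ⊥) (P.isPolicyValue_G ⊥)
      Bandit.eventually_decide_lt_atBot hwp x,
    P.tendsto_metrics (P.isPolicyValue_F ⊤) (P.isPolicyValue_G ⊤)
      Bandit.eventually_decide_lt_atTop hwp x⟩
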